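/- arXiv:math-ph/0609015 — 5 statements merged into one kernel-verified Lean document; each statement's English description precedes it below -/
import Mathlib

section
/- For every g ∈ L²±(ℝ₊) and every t > 0, the past-smoothed function converges pointwise to the left limit: g⁻(t,ε) → g(t⁻) as ε → 0⁺. -/
open MeasureTheory Filter Set

/-- The exponential kernel `G_ε(τ) = (γ/(4ε))·exp(−γ|τ|/(2ε))`. -/
noncomputable def Gker (γ ε τ : ℝ) : ℝ := (γ / (4 * ε)) * Real.exp (-(γ * |τ|) / (2 * ε))

/-! With `k = γ/(2ε)`, the kernel `2G_ε` on `(0, t]` is `k e^{-kτ}`. As `k → ∞` its mass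
`1 - e^{-kt}` tends to `1` and it tends to `0` uniformly on `[δ, ∞)` for every `δ > 0`, so it is a
peak family at `0`. Integrated against `τ ↦ g(t - τ)`, which is integrable on `(0, t]` because
`L²` embeds into `L¹` on sets of finite measure, it therefore converges to the limit of
`g(t - τ)` as `τ → 0⁺`, that is, to `g(t⁻)`. -/

open Real Topology

lemma two_mul_Gker (γ ε τ : ℝ) :
    2 * Gker γ ε τ = γ / (2 * ε) * exp (-(γ / (2 * ε) * |τ|)) := by
  unfold Gker
  ring_nf

lemma integral_mul_exp_neg_mul (k t : ℝ) :
    ∫ τ in (0 : ℝ)..t, k * exp (-(k * τ)) = 1 - exp (-(k * t)) := by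
  have hderiv (x : ℝ) : HasDerivAt (fun τ => -exp (-(k * τ))) (k * exp (-(k * x))) x := by
    refine (((hasDerivAt_id x).const_mul k).neg.exp).neg.congr_deriv ?_
    simp only [Pi.neg_apply, id_eq, mul_one]
    ring
  rw [intervalIntegral.integral_eq_sub_of_hasDerivAt (fun x _ => hderiv x)
    ((by fun_prop : Continuous fun τ => k * exp (-(k * τ))).intervalIntegrable _ _)]
  simp only [mul_zero, neg_zero, exp_zero]
  ring

lemma tendsto_mul_exp_neg_mul_atTop {δ : ℝ} (hδ : 0 < δ) :
    Tendsto (fun k : ℝ => k * exp (-(k * δ))) atTop (𝓝 0) := by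
  have h := ((tendsto_pow_mul_exp_neg_atTop_nhds_zero 1).comp
    (tendsto_id.atTop_mul_const hδ)).const_mul δ⁻¹
  rw [mul_zero] at h
  refine h.congr fun k => ?_
  simp only [Function.comp_apply, id_eq, pow_one]
  field_simp

lemma tendstoUniformlyOn_mul_exp_neg_mul {δ : ℝ} (hδ : 0 < δ) :
    TendstoUniformlyOn (fun k τ : ℝ => k * exp (-(k * τ))) 0 atTop (Ici δ) := by
  rw [Metric.tendstoUniformlyOn_iff]
  intro η hη
  filter_upwards [(tendsto_mul_exp_neg_mul_atTop hδ).eventually (gt_mem_nhds hη),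
    eventually_ge_atTop 0] with k hkη hk τ hτ
  rw [Pi.zero_apply, dist_zero_left, Real.norm_of_nonneg (by positivity)]
  calc k * exp (-(k * τ)) ≤ k * exp (-(k * δ)) := by gcongr; exact hτ
    _ < η := hkη

theorem tendsto_setIntegral_mul_exp_neg_mul_smul {E : Type*} [NormedAddCommGroup E]
    [NormedSpace ℝ E] [CompleteSpace E] {G : ℝ → E} {a : E} {t : ℝ} (ht : 0 < t)
    (hG : IntegrableOn G (Ioc 0 t)) (hGa : Tendsto G (𝓝[>] 0) (𝓝 a)) :
    Tendsto (fun k : ℝ => ∫ τ in Ioc 0 t, (k * exp (-(k * τ))) • G τ) atTop (𝓝 a) := by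
  have hmass : Tendsto (fun k : ℝ => ∫ τ in Ioc 0 t, k * exp (-(k * τ))) atTop (𝓝 1) := by
    simp_rw [← intervalIntegral.integral_of_le ht.le, integral_mul_exp_neg_mul]
    simpa using tendsto_const_nhds.sub
      (tendsto_exp_atBot.comp (tendsto_neg_atTop_atBot.comp (tendsto_id.atTop_mul_const ht)))
  refine tendsto_setIntegral_peak_smul_of_integrableOn_of_tendsto measurableSet_Ioc
    measurableSet_Ioc subset_rfl self_mem_nhdsWithin (by simp) ?_ ?_ hmass
    (Eventually.of_forall fun k => by fun_prop) hG
    (hGa.mono_left (nhdsWithin_mono _ Ioc_subset_Ioi_self))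
  · filter_upwards [eventually_ge_atTop 0] with k hk τ _
    positivity
  · intro u hu h0u
    obtain ⟨δ, hδ, hball⟩ := Metric.isOpen_iff.1 hu 0 h0u
    refine (tendstoUniformlyOn_mul_exp_neg_mul hδ).mono fun τ hτ => ?_
    by_contra! hτδ
    exact hτ.2 (hball (by simpa [abs_of_pos hτ.1.1] using hτδ))

lemma MeasureTheory.MemLp.intervalIntegrable_of_Ioi {E : Type*} [NormedAddCommGroup E]
    {g : ℝ → E} {p : ENNReal} {a t : ℝ} (hp : 1 ≤ p) (hg : MemLp g p (volume.restrict (Ioi a)))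
    (hat : a ≤ t) : IntervalIntegrable g volume a t := by
  rw [intervalIntegrable_iff_integrableOn_Ioc_of_le hat]
  have : IsFiniteMeasure ((volume.restrict (Ioi a)).restrict (Ioc a t)) := by
    rw [Measure.restrict_restrict measurableSet_Ioc, Ioc_inter_Ioi]
    infer_instance
  have h := (hg.restrict (Ioc a t)).integrable hp
  rwa [Measure.restrict_restrict measurableSet_Ioc, Ioc_inter_Ioi, max_self] at h

lemma tendsto_const_sub_nhdsGT (t : ℝ) :
    Tendsto (fun τ : ℝ => t - τ) (𝓝[>] 0) (𝓝[<] t) := by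
  refine tendsto_nhdsWithin_iff.2 ⟨?_, ?_⟩
  · simpa using (continuous_sub_left t).continuousWithinAt.tendsto (x := 0) (s := Ioi 0)
  · filter_upwards [self_mem_nhdsWithin] with τ hτ
    exact sub_lt_self t hτ

theorem pastSmoothed_tendsto_leftLimit_general
    (γ : ℝ) (hγ : 0 < γ) (g : ℝ → ℂ)
    (hL2 : MemLp g 2 (volume.restrict (Ioi (0 : ℝ))))
    (t : ℝ) (ht : 0 < t) (gm : ℂ)
    (hgm : Tendsto g (nhdsWithin t (Iio t)) (nhds gm)) :
    Tendsto (fun ε : ℝ => 2 * ∫ τ in (0 : ℝ)..t, g (t - τ) * (Gker γ ε τ : ℂ))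
      (nhdsWithin 0 (Ioi 0)) (nhds gm) := by
  have hint : IntegrableOn (fun τ => g (t - τ)) (Ioc 0 t) := by
    rw [← intervalIntegrable_iff_integrableOn_Ioc_of_le ht.le]
    simpa using ((hL2.intervalIntegrable_of_Ioi one_le_two ht.le).comp_sub_left t).symm
  have hrate : Tendsto (fun ε : ℝ => γ / (2 * ε)) (𝓝[>] 0) atTop :=
    (tendsto_inv_nhdsGT_zero.const_mul_atTop (half_pos hγ)).congr fun ε => by ring
  refine ((tendsto_setIntegral_mul_exp_neg_mul_smul ht hint
    (hgm.comp (tendsto_const_sub_nhdsGT t))).comp hrate).congr fun ε => ?_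
  rw [intervalIntegral.integral_of_le ht.le, ← integral_const_mul]
  refine setIntegral_congr_fun measurableSet_Ioc fun τ hτ => ?_
  have hkernel : γ / (2 * ε) * exp (-(γ / (2 * ε) * τ)) = 2 * Gker γ ε τ := by
    rw [two_mul_Gker, abs_of_pos hτ.1]
  simp only [hkernel, Complex.real_smul]
  push_cast
  ring

/-- For `g ∈ L²±(ℝ₊)` and `t > 0`, the past-smoothed function
`g⁻(t,ε) = 2∫₀^t g(t−τ) G_ε(τ) dτ` converges to the left limit `g(t⁻)` as `ε → 0⁺`. -/
theorem pastSmoothed_tendsto_leftLimit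
    (γ : ℝ) (hγ : 0 < γ) (g : ℝ → ℂ)
    (hbdd : ∃ C : ℝ, ∀ s : ℝ, 0 ≤ s → ‖g s‖ ≤ C)
    (hL2 : MemLp g 2 (volume.restrict (Ioi (0 : ℝ))))
    (hright : ∀ s : ℝ, 0 ≤ s → ∃ L : ℂ, Tendsto g (nhdsWithin s (Ioi s)) (nhds L))
    (hleft : ∀ s : ℝ, 0 < s → ∃ L : ℂ, Tendsto g (nhdsWithin s (Iio s)) (nhds L))
    (t : ℝ) (ht : 0 < t) (gm : ℂ)
    (hgm : Tendsto g (nhdsWithin t (Iio t)) (nhds gm)) :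
    Tendsto (fun ε : ℝ => 2 * ∫ τ in (0 : ℝ)..t, g (t - τ) * (Gker γ ε τ : ℂ))
      (nhdsWithin 0 (Ioi 0)) (nhds gm) :=
  pastSmoothed_tendsto_leftLimit_general γ hγ g hL2 t ht gm hgm
end

section
/- For every g ∈ L²±(ℝ₊) and every t > 0, the twice-smoothed integral converges to the average of the one-sided limits: lim_{ε→0⁺} 2∫₀^t G_ε(t−s) g⁺(s,ε) ds = (g(t⁺) + g(t⁻))/2. -/
/-!
With `a = γ / (2ε)` the kernel `G_ε` is the Laplace density `(a/2) e^{-a|x|}`. Exchanging the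
two integrals (Fubini on the triangle `s < w`) turns the twice-smoothed integral into
`∫_{w>0} (G_ε(w - t) - G_ε(w + t)) g(w) dw`: the kernel centred at `t` minus its mirror image
centred at `-t`. After the substitution `w = t + y/a`, dominated convergence shows that the first
term tends to `(g(t⁺) + g(t⁻))/2`, each half-line carrying half of the mass, while the mirror
term tends to `0` because `g`, extended by zero, vanishes near `-t`.
-/

open MeasureTheory Filter Set

open Topology

noncomputable def laplaceKernel (a x : ℝ) : ℝ := a / 2 * Real.exp (-(a * |x|))

lemma Gker_eq_laplaceKernel (γ ε x : ℝ) : Gker γ ε x = laplaceKernel (γ / (2 * ε)) x := by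
  unfold Gker laplaceKernel
  congr 1 <;> ring_nf

lemma laplaceKernel_nonneg {a : ℝ} (ha : 0 ≤ a) (x : ℝ) : 0 ≤ laplaceKernel a x := by
  unfold laplaceKernel; positivity

lemma continuous_laplaceKernel (a : ℝ) : Continuous (laplaceKernel a) := by
  unfold laplaceKernel; fun_prop

lemma laplaceKernel_neg (a x : ℝ) : laplaceKernel a (-x) = laplaceKernel a x := by
  simp [laplaceKernel]

lemma laplaceKernel_div {a : ℝ} (ha : 0 < a) (y : ℝ) :
    laplaceKernel a (y / a) = a * laplaceKernel 1 y := by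
  simp only [laplaceKernel, abs_div, abs_of_pos ha, mul_div_cancel₀ _ ha.ne', one_mul]
  ring

lemma integral_Ioi_laplaceKernel_one : ∫ x in Ioi 0, laplaceKernel 1 x = 1 / 2 := by
  rw [setIntegral_congr_fun measurableSet_Ioi (g := fun x => 1 / 2 * Real.exp (-x))
    (fun x hx => by simp [laplaceKernel, abs_of_pos (mem_Ioi.mp hx)]),
    integral_const_mul, integral_exp_neg_Ioi_zero, mul_one]

lemma integral_Iic_laplaceKernel_one : ∫ x in Iic 0, laplaceKernel 1 x = 1 / 2 := by
  rw [← neg_zero, ← integral_comp_neg_Ioi]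
  simp only [laplaceKernel_neg, integral_Ioi_laplaceKernel_one]

lemma integrable_laplaceKernel_one : Integrable (laplaceKernel 1) := by
  have hIoi : IntegrableOn (laplaceKernel 1) (Ioi 0) :=
    IntegrableOn.congr_fun ((exp_neg_integrableOn_Ioi 0 one_pos).const_mul (1 / 2))
      (fun x hx => by simp [laplaceKernel, abs_of_pos (mem_Ioi.mp hx)]) measurableSet_Ioi
  have hIic : IntegrableOn (laplaceKernel 1) (Iic 0) :=
    IntegrableOn.congr_fun ((integrableOn_exp_Iic 0).const_mul (1 / 2))
      (fun x hx => by simp [laplaceKernel, abs_of_nonpos (mem_Iic.mp hx)]) measurableSet_Iic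
  simpa [Iic_union_Ioi] using hIic.union hIoi

lemma integrable_laplaceKernel {a : ℝ} (ha : 0 < a) : Integrable (laplaceKernel a) := by
  refine ((integrable_laplaceKernel_one.comp_mul_left' ha.ne').const_mul a).congr ?_
  refine Eventually.of_forall fun x => ?_
  simpa [mul_div_cancel_left₀ _ ha.ne'] using (laplaceKernel_div ha (a * x)).symm

section

variable {E : Type*} [NormedAddCommGroup E] [NormedSpace ℝ E]

lemma integral_laplaceKernel_sub_smul_eq {a : ℝ} (ha : 0 < a) (f : ℝ → E) (t : ℝ) :
    ∫ x, laplaceKernel a (x - t) • f x = ∫ y, laplaceKernel 1 y • f (t + y / a) := by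
  rw [← integral_add_right_eq_self (fun x => laplaceKernel a (x - t) • f x) t]
  rw [← inv_smul_smul₀ ha.ne' (∫ x, _), ← abs_of_pos ha, ← Measure.integral_comp_div,
    abs_of_pos ha, ← integral_smul]
  congr 1 with y
  rw [add_sub_cancel_right, laplaceKernel_div ha, add_comm, mul_smul, inv_smul_smul₀ ha.ne']

lemma quasiMeasurePreserving_const_add_div (t : ℝ) {a : ℝ} (ha : a ≠ 0) :
    Measure.QuasiMeasurePreserving (fun y => t + y / a) := by
  have hcomp : (fun y => t + y / a) = (t + ·) ∘ (a⁻¹ • ·) := by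
    ext y; simp [div_eq_inv_mul]
  rw [hcomp]
  exact (measurePreserving_add_left volume t).quasiMeasurePreserving.comp
    (Measure.quasiMeasurePreserving_smul volume (inv_ne_zero ha))

lemma tendsto_add_div_atTop_nhdsGT {t y : ℝ} (hy : 0 < y) :
    Tendsto (fun a : ℝ => t + y / a) atTop (𝓝[>] t) := by
  refine tendsto_nhdsWithin_iff.2 ⟨?_, ?_⟩
  · simpa using tendsto_const_nhds.add ((tendsto_const_nhds (x := y)).div_atTop tendsto_id)
  · filter_upwards [eventually_gt_atTop 0] with a ha
    simpa using div_pos hy ha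

lemma tendsto_add_div_atTop_nhdsLT {t y : ℝ} (hy : y < 0) :
    Tendsto (fun a : ℝ => t + y / a) atTop (𝓝[<] t) := by
  refine tendsto_nhdsWithin_iff.2 ⟨?_, ?_⟩
  · simpa using tendsto_const_nhds.add ((tendsto_const_nhds (x := y)).div_atTop tendsto_id)
  · filter_upwards [eventually_gt_atTop 0] with a ha
    simpa using div_neg_of_neg_of_pos hy ha

theorem tendsto_integral_laplaceKernel_smul [CompleteSpace E] {f : ℝ → E}
    (hf : AEStronglyMeasurable f) {C : ℝ} (hC : ∀ x, ‖f x‖ ≤ C) {t : ℝ} {Lp Lm : E}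
    (hp : Tendsto f (𝓝[>] t) (𝓝 Lp)) (hm : Tendsto f (𝓝[<] t) (𝓝 Lm)) :
    Tendsto (fun a => ∫ x, laplaceKernel a (x - t) • f x) atTop
      (𝓝 ((2 : ℝ)⁻¹ • (Lp + Lm))) := by
  let lim : ℝ → E := (Ioi 0).piecewise (fun y => laplaceKernel 1 y • Lp)
    (fun y => laplaceKernel 1 y • Lm)
  have hlim : ∫ y, lim y = (2 : ℝ)⁻¹ • (Lp + Lm) := by
    rw [integral_piecewise measurableSet_Ioi
      (integrable_laplaceKernel_one.smul_const _).integrableOn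
      (integrable_laplaceKernel_one.smul_const _).integrableOn, compl_Ioi, integral_smul_const,
      integral_smul_const, integral_Ioi_laplaceKernel_one, integral_Iic_laplaceKernel_one]
    simp [smul_add]
  have hdct : Tendsto (fun a => ∫ y, laplaceKernel 1 y • f (t + y / a)) atTop
      (𝓝 (∫ y, lim y)) := by
    refine tendsto_integral_filter_of_dominated_convergence (fun y => C * laplaceKernel 1 y)
      ?_ ?_ (integrable_laplaceKernel_one.const_mul C) ?_
    · filter_upwards [eventually_gt_atTop 0] with a ha
      exact (continuous_laplaceKernel 1).aestronglyMeasurable.smul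
        (hf.comp_quasiMeasurePreserving (quasiMeasurePreserving_const_add_div t ha.ne'))
    · refine Eventually.of_forall fun a => Eventually.of_forall fun y => ?_
      rw [norm_smul, Real.norm_of_nonneg (laplaceKernel_nonneg zero_le_one y), mul_comm]
      exact mul_le_mul_of_nonneg_right (hC _) (laplaceKernel_nonneg zero_le_one y)
    · filter_upwards [Measure.ae_ne volume 0] with y hy
      rcases hy.lt_or_gt with hy | hy
      · simpa [lim, hy.not_gt] using (hm.comp (tendsto_add_div_atTop_nhdsLT hy)).const_smul _
      · simpa [lim, hy] using (hp.comp (tendsto_add_div_atTop_nhdsGT hy)).const_smul _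
  rw [← hlim]
  refine hdct.congr' ?_
  filter_upwards [eventually_gt_atTop 0] with a ha
  exact (integral_laplaceKernel_sub_smul_eq ha f t).symm

theorem integral_Ioc_smul_integral_Ioi [CompleteSpace E] {φ : ℝ → ℝ} {f : ℝ → E}
    {t : ℝ} (hφ : IntegrableOn φ (Ioc 0 t)) (hf : IntegrableOn f (Ioi 0)) :
    ∫ s in Ioc 0 t, φ s • ∫ w in Ioi s, f w =
      ∫ w in Ioi 0, (∫ s in Ioc 0 (min t w), φ s) • f w := by
  have hF : Integrable (Function.uncurry fun s w => (Iio w).indicator (fun s => φ s • f w) s)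
      ((volume.restrict (Ioc (0 : ℝ) t)).prod (volume.restrict (Ioi (0 : ℝ)))) :=
    (hφ.smul_prod hf).indicator (measurableSet_lt measurable_fst measurable_snd)
  calc ∫ s in Ioc 0 t, φ s • ∫ w in Ioi s, f w
      = ∫ s in Ioc 0 t, ∫ w in Ioi 0, (Iio w).indicator (fun s => φ s • f w) s := by
        refine setIntegral_congr_fun measurableSet_Ioc fun s hs => ?_
        have hswap : ∀ w, (Iio w).indicator (fun s => φ s • f w) s =
            (Ioi s).indicator (fun w => φ s • f w) w := fun w => by simp [indicator_apply]
        simp_rw [hswap]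
        rw [setIntegral_indicator measurableSet_Ioi, inter_eq_right.2 (Ioi_subset_Ioi hs.1.le),
          integral_smul]
    _ = ∫ w in Ioi 0, ∫ s in Ioc 0 t, (Iio w).indicator (fun s => φ s • f w) s :=
        integral_integral_swap hF
    _ = ∫ w in Ioi 0, (∫ s in Ioc 0 (min t w), φ s) • f w := by
        refine setIntegral_congr_fun measurableSet_Ioi fun w _ => ?_
        rw [setIntegral_indicator measurableSet_Iio, integral_smul_const,
          setIntegral_congr_set ((ae_eq_refl _).inter Iio_ae_eq_Iic), Ioc_inter_Iic]

lemma integral_Ioi_zero_comp_add_left (h : ℝ → E) (s : ℝ) :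
    ∫ τ in Ioi 0, h (s + τ) = ∫ w in Ioi s, h w := by
  simpa using (measurePreserving_add_left volume s).setIntegral_preimage_emb
    (measurableEmbedding_addLeft s) h (Ioi s)

lemma integral_exp_min_mul_eq_laplaceKernel_sub {a t w : ℝ} (ha : 0 < a) (ht : 0 ≤ t)
    (hw : 0 ≤ w) :
    (∫ s in Ioc 0 (min t w), Real.exp (2 * a * s)) * (a ^ 2 * Real.exp (-(a * (t + w)))) =
      laplaceKernel a (w - t) - laplaceKernel a (w + t) := by
  have h2a : 2 * a ≠ 0 := by positivity
  rw [← intervalIntegral.integral_of_le (le_min ht hw),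
    intervalIntegral.integral_comp_mul_left (fun s => Real.exp s) h2a, integral_exp,
    mul_zero, Real.exp_zero, laplaceKernel, laplaceKernel,
    abs_of_nonneg (by linarith : 0 ≤ w + t)]
  have hmin : 2 * a * min t w + -(a * (t + w)) = -(a * |w - t|) := by
    rcases le_total t w with h | h
    · rw [min_eq_left h, abs_of_nonneg (sub_nonneg.2 h)]; ring
    · rw [min_eq_right h, abs_of_nonpos (sub_nonpos.2 h)]; ring
  rw [← hmin, Real.exp_add, add_comm w t, smul_eq_mul]
  field_simp

/-- `futureSmoothed (γ / (2 * ε)) g` is the paper's `g⁺(·, ε)`. -/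
noncomputable def futureSmoothed (a : ℝ) (g : ℝ → E) (s : ℝ) : E :=
  (2 : ℝ) • ∫ τ in Ioi 0, laplaceKernel a τ • g (s + τ)

noncomputable def twiceSmoothed (a : ℝ) (g : ℝ → E) (t : ℝ) : E :=
  (2 : ℝ) • ∫ s in Ioc 0 t, laplaceKernel a (t - s) • futureSmoothed a g s

lemma two_smul_laplaceKernel_smul_futureSmoothed {a s t : ℝ} (hst : s ≤ t) (g : ℝ → E) :
    (2 : ℝ) • laplaceKernel a (t - s) • futureSmoothed a g s =
      Real.exp (2 * a * s) • ∫ w in Ioi s, (a ^ 2 * Real.exp (-(a * (t + w)))) • g w := by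
  rw [← integral_Ioi_zero_comp_add_left (fun w => _ • g w) s, futureSmoothed,
    ← integral_smul, ← integral_smul, ← integral_smul, ← integral_smul]
  refine setIntegral_congr_fun measurableSet_Ioi fun τ hτ => ?_
  simp only [smul_smul]
  congr 1
  rw [laplaceKernel, laplaceKernel, abs_of_nonneg (sub_nonneg.2 hst),
    abs_of_pos (mem_Ioi.1 hτ)]
  have hexp : -(a * (t - s)) + -(a * τ) = 2 * a * s + -(a * (t + (s + τ))) := by ring
  calc _ = a ^ 2 * Real.exp (-(a * (t - s)) + -(a * τ)) := by rw [Real.exp_add]; ring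
    _ = _ := by rw [hexp, Real.exp_add]; ring

theorem twiceSmoothed_eq_integral [CompleteSpace E] {a t : ℝ} (ha : 0 < a) (ht : 0 ≤ t)
    {g : ℝ → E} (hg : IntegrableOn (fun w => Real.exp (-a * w) • g w) (Ioi 0)) :
    twiceSmoothed a g t =
      ∫ w in Ioi 0, (laplaceKernel a (w - t) - laplaceKernel a (w + t)) • g w := by
  have hφ : IntegrableOn (fun s => Real.exp (2 * a * s)) (Ioc 0 t) :=
    (by fun_prop : Continuous fun s => Real.exp (2 * a * s)).integrableOn_Icc.mono_set
      Ioc_subset_Icc_self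
  have hf : IntegrableOn (fun w => (a ^ 2 * Real.exp (-(a * (t + w)))) • g w) (Ioi 0) := by
    refine IntegrableOn.congr_fun (hg.smul (a ^ 2 * Real.exp (-a * t))) (fun w _ => ?_)
      measurableSet_Ioi
    rw [Pi.smul_apply, smul_smul, mul_assoc, ← Real.exp_add]
    ring_nf
  rw [twiceSmoothed, ← integral_smul,
    setIntegral_congr_fun measurableSet_Ioc
      (fun s hs => two_smul_laplaceKernel_smul_futureSmoothed hs.2 g),
    integral_Ioc_smul_integral_Ioi hφ hf]
  refine setIntegral_congr_fun measurableSet_Ioi fun w hw => ?_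
  rw [smul_smul, integral_exp_min_mul_eq_laplaceKernel_sub ha ht (le_of_lt hw)]

theorem tendsto_twiceSmoothed_atTop [CompleteSpace E] {g : ℝ → E}
    (hg : AEStronglyMeasurable g (volume.restrict (Ioi 0))) {C : ℝ}
    (hC : ∀ x ∈ Ioi 0, ‖g x‖ ≤ C) {t : ℝ} (ht : 0 < t) {gp gm : E}
    (hgp : Tendsto g (𝓝[>] t) (𝓝 gp)) (hgm : Tendsto g (𝓝[<] t) (𝓝 gm)) :
    Tendsto (fun a => twiceSmoothed a g t) atTop (𝓝 ((2 : ℝ)⁻¹ • (gp + gm))) := by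
  set g₀ := (Ioi (0 : ℝ)).indicator g
  have hg₀ : AEStronglyMeasurable g₀ :=
    (aestronglyMeasurable_indicator_iff measurableSet_Ioi).2 hg
  have hg₀C : ∀ x, ‖g₀ x‖ ≤ C := fun x => by
    by_cases hx : x ∈ Ioi 0
    · simpa [g₀, hx] using hC x hx
    · simpa [g₀, hx] using (norm_nonneg _).trans (hC 1 (mem_Ioi.2 one_pos))
  have hnear : g₀ =ᶠ[𝓝 t] g :=
    eventuallyEq_of_mem (Ioi_mem_nhds ht) fun x hx => indicator_of_mem hx g
  have hfar : (fun _ => 0) =ᶠ[𝓝 (-t)] g₀ :=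
    eventuallyEq_of_mem (Iio_mem_nhds (neg_neg_of_pos ht)) fun x hx =>
      (indicator_of_notMem (notMem_Ioi.2 (le_of_lt hx)) g).symm
  have hlim_t := tendsto_integral_laplaceKernel_smul hg₀ hg₀C
    (hgp.congr' (hnear.symm.filter_mono nhdsWithin_le_nhds))
    (hgm.congr' (hnear.symm.filter_mono nhdsWithin_le_nhds))
  have hlim_neg_t := tendsto_integral_laplaceKernel_smul hg₀ hg₀C
    (tendsto_const_nhds.congr' (hfar.filter_mono nhdsWithin_le_nhds))
    (tendsto_const_nhds.congr' (hfar.filter_mono nhdsWithin_le_nhds))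
  have hlim := hlim_t.sub hlim_neg_t
  rw [add_zero, smul_zero, sub_zero] at hlim
  refine hlim.congr' ?_
  filter_upwards [eventually_gt_atTop 0] with a ha
  have hexp : IntegrableOn (fun w => Real.exp (-a * w) • g w) (Ioi 0) :=
    (exp_neg_integrableOn_Ioi 0 ha).smul_bdd C hg
      (ae_restrict_of_forall_mem measurableSet_Ioi hC)
  have hint : ∀ c, Integrable fun x => laplaceKernel a (x - c) • g₀ x := fun c =>
    ((integrable_laplaceKernel ha).comp_sub_right c).smul_bdd C hg₀ (ae_of_all _ hg₀C)
  rw [twiceSmoothed_eq_integral ha ht.le hexp, ← integral_sub (hint t) (hint (-t)),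
    ← integral_indicator measurableSet_Ioi]
  congr 1 with x
  by_cases hx : x ∈ Ioi 0 <;> simp [g₀, hx, sub_smul]

end

lemma two_mul_integral_Gker_eq_twiceSmoothed {γ ε t : ℝ} (ht : 0 ≤ t) (g : ℝ → ℂ) :
    2 * ∫ s in (0 : ℝ)..t, (Gker γ ε (t - s) : ℂ) *
        (2 * ∫ τ in Ioi (0 : ℝ), g (s + τ) * (Gker γ ε τ : ℂ)) =
      twiceSmoothed (γ / (2 * ε)) g t := by
  simp [twiceSmoothed, futureSmoothed, Gker_eq_laplaceKernel, Complex.real_smul, mul_comm,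
    intervalIntegral.integral_of_le ht]

theorem twiceSmoothed_tendsto_average_general
    (γ : ℝ) (hγ : 0 < γ) (g : ℝ → ℂ)
    (hbdd : ∃ C : ℝ, ∀ s : ℝ, 0 ≤ s → ‖g s‖ ≤ C)
    (hL2 : MemLp g 2 (volume.restrict (Ioi (0 : ℝ))))
    (t : ℝ) (ht : 0 < t) (gp gm : ℂ)
    (hgp : Tendsto g (nhdsWithin t (Ioi t)) (nhds gp))
    (hgm : Tendsto g (nhdsWithin t (Iio t)) (nhds gm)) :
    Tendsto (fun ε : ℝ =>
        2 * ∫ s in (0 : ℝ)..t, (Gker γ ε (t - s) : ℂ) *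
          (2 * ∫ τ in Ioi (0 : ℝ), g (s + τ) * (Gker γ ε τ : ℂ)))
      (nhdsWithin 0 (Ioi 0)) (nhds ((gp + gm) / 2)) := by
  obtain ⟨C, hC⟩ := hbdd
  have hscale : Tendsto (fun ε : ℝ => γ / (2 * ε)) (𝓝[>] 0) atTop := by
    refine (tendsto_inv_nhdsGT_zero.const_mul_atTop (half_pos hγ)).congr fun ε => ?_
    ring
  have hlim := (tendsto_twiceSmoothed_atTop hL2.aestronglyMeasurable
    (fun x hx => hC x (le_of_lt hx)) ht hgp hgm).comp hscale
  rw [show (gp + gm) / 2 = (2 : ℝ)⁻¹ • (gp + gm) by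
    simp [Complex.real_smul, div_eq_inv_mul, mul_add]]
  exact hlim.congr fun ε => (two_mul_integral_Gker_eq_twiceSmoothed ht.le g).symm

/-- For `g ∈ L²±(ℝ₊)` and `t > 0`, the twice-smoothed integral
`2∫₀^t G_ε(t−s) g⁺(s,ε) ds`, where `g⁺(s,ε) = 2∫₀^∞ g(s+τ) G_ε(τ) dτ`, converges to
`(g(t⁺) + g(t⁻))/2` as `ε → 0⁺`. -/
theorem twiceSmoothed_tendsto_average
    (γ : ℝ) (hγ : 0 < γ) (g : ℝ → ℂ)
    (hbdd : ∃ C : ℝ, ∀ s : ℝ, 0 ≤ s → ‖g s‖ ≤ C)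
    (hL2 : MemLp g 2 (volume.restrict (Ioi (0 : ℝ))))
    (hright : ∀ s : ℝ, 0 ≤ s → ∃ L : ℂ, Tendsto g (nhdsWithin s (Ioi s)) (nhds L))
    (hleft : ∀ s : ℝ, 0 < s → ∃ L : ℂ, Tendsto g (nhdsWithin s (Iio s)) (nhds L))
    (t : ℝ) (ht : 0 < t) (gp gm : ℂ)
    (hgp : Tendsto g (nhdsWithin t (Ioi t)) (nhds gp))
    (hgm : Tendsto g (nhdsWithin t (Iio t)) (nhds gm)) :
    Tendsto (fun ε : ℝ =>
        2 * ∫ s in (0 : ℝ)..t, (Gker γ ε (t - s) : ℂ) *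
          (2 * ∫ τ in Ioi (0 : ℝ), g (s + τ) * (Gker γ ε τ : ℂ)))
      (nhdsWithin 0 (Ioi 0)) (nhds ((gp + gm) / 2)) :=
  twiceSmoothed_tendsto_average_general γ hγ g hbdd hL2 t ht gp gm hgp hgm
end

section
/- For all t, τ ≥ 0 the kernel composition identity holds: 4∫₀^{min(t,τ)} G_ε(t−s) G_ε(s−τ) ds = G_ε(t−τ) − G_ε(τ)·exp(−γt/(2ε)). -/
open MeasureTheory Filter Set

/-!
With `κ = γ/(2ε)`, the kernel is `G_ε = (γ/(4ε))·exp (-κ|·|)`. For `s ≤ min t τ` both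
absolute values open with a fixed sign, so the integrand is a multiple of
`exp (-κ (t + τ)) · exp (2κ s)`, whose integral is elementary; and
`t + τ - 2 min t τ = |t - τ|` turns the upper endpoint into `exp (-κ |t - τ|)`.
-/

open Real

theorem integral_exp_mul_of_ne_zero {a : ℝ} (ha : a ≠ 0) (m : ℝ) :
    ∫ s in (0 : ℝ)..m, exp (a * s) = (exp (a * m) - 1) / a := by
  rw [intervalIntegral.integral_comp_mul_left exp ha, integral_exp, mul_zero, exp_zero,
    smul_eq_mul, inv_mul_eq_div]

theorem add_sub_two_mul_min_eq_abs_sub (t τ : ℝ) : t + τ - 2 * min t τ = |t - τ| := by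
  linarith [min_add_max t τ, max_sub_min_eq_abs' t τ]

theorem exp_neg_abs_mul_exp_neg_abs_of_le_min {κ t τ s : ℝ} (hs : s ≤ min t τ) :
    exp (-κ * |t - s|) * exp (-κ * |s - τ|) = exp (-κ * (t + τ)) * exp (2 * κ * s) := by
  rw [abs_of_nonneg (sub_nonneg.2 (hs.trans (min_le_left t τ))),
    abs_of_nonpos (sub_nonpos.2 (hs.trans (min_le_right t τ))), ← exp_add, ← exp_add]
  ring_nf

theorem integral_exp_neg_abs_mul_exp_neg_abs {κ : ℝ} (hκ : κ ≠ 0) {t τ : ℝ} (ht : 0 ≤ t)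
    (hτ : 0 ≤ τ) :
    ∫ s in (0 : ℝ)..min t τ, exp (-κ * |t - s|) * exp (-κ * |s - τ|)
      = (exp (-κ * |t - τ|) - exp (-κ * (t + τ))) / (2 * κ) := by
  have h2κ : 2 * κ ≠ 0 := mul_ne_zero two_ne_zero hκ
  have hcongr : EqOn (fun s ↦ exp (-κ * |t - s|) * exp (-κ * |s - τ|))
      (fun s ↦ exp (-κ * (t + τ)) * exp (2 * κ * s)) (uIcc 0 (min t τ)) := by
    intro s hs
    rw [uIcc_of_le (le_min ht hτ)] at hs
    exact exp_neg_abs_mul_exp_neg_abs_of_le_min hs.2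
  have hexponent : -κ * (t + τ) + 2 * κ * min t τ = -κ * |t - τ| := by
    rw [← add_sub_two_mul_min_eq_abs_sub]
    ring
  rw [intervalIntegral.integral_congr hcongr, intervalIntegral.integral_const_mul,
    integral_exp_mul_of_ne_zero h2κ, mul_div_assoc', mul_sub, mul_one, ← exp_add, hexponent]

theorem Gker_eq (γ ε x : ℝ) : Gker γ ε x = γ / (4 * ε) * exp (-(γ / (2 * ε)) * |x|) := by
  rw [Gker, neg_mul, neg_div, mul_div_right_comm]

/-- Kernel composition identity: for `t, τ ≥ 0`,
`4∫₀^{min(t,τ)} G_ε(t−s) G_ε(s−τ) ds = G_ε(t−τ) − G_ε(τ)·exp(−γt/(2ε))`. -/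
theorem kernel_composition_identity
    (γ ε : ℝ) (hγ : 0 < γ) (hε : 0 < ε) (t τ : ℝ) (ht : 0 ≤ t) (hτ : 0 ≤ τ) :
    4 * ∫ s in (0 : ℝ)..(min t τ), Gker γ ε (t - s) * Gker γ ε (s - τ)
      = Gker γ ε (t - τ) - Gker γ ε τ * Real.exp (-(γ * t) / (2 * ε)) := by
  have hκ : γ / (2 * ε) ≠ 0 := by positivity
  have hproduct (s : ℝ) : Gker γ ε (t - s) * Gker γ ε (s - τ)
      = (γ / (4 * ε)) ^ 2
        * (exp (-(γ / (2 * ε)) * |t - s|) * exp (-(γ / (2 * ε)) * |s - τ|)) := by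
    rw [Gker_eq, Gker_eq]
    ring
  have htail : Gker γ ε τ * exp (-(γ * t) / (2 * ε))
      = γ / (4 * ε) * exp (-(γ / (2 * ε)) * (t + τ)) := by
    rw [Gker_eq, abs_of_nonneg hτ, mul_assoc, ← exp_add]
    congr 2
    ring
  simp only [hproduct]
  rw [intervalIntegral.integral_const_mul, integral_exp_neg_abs_mul_exp_neg_abs hκ ht hτ, htail,
    Gker_eq]
  field_simp
end

section
/- For all t, s ≥ 0 the quantum Ornstein–Uhlenbeck correlation identity holds: (γ²/(4ε²))·exp(−γ(t+s)/(2ε))·∫₀^{min(t,s)} exp(γu/ε) du + (γ/(4ε))·exp(−γ(t+s)/(2ε)) = G_ε(t−s). (This is the scalar content of the commutation relation [ã_t(ε), ã_s(ε)†] = G_ε(t−s) for the quantum Ornstein–Uhlenbeck processes.) -/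
open MeasureTheory Filter Set

lemma exp_integral_aux (c : ℝ) (hc : c ≠ 0) (m : ℝ) :
    (∫ u in (0 : ℝ)..m, Real.exp (c * u)) = (Real.exp (c * m) - 1) / c := by
  have : (∫ u in (0 : ℝ)..m, Real.exp (c * u))
      = ∫ u in (0 : ℝ)..m, Real.exp (c * u) := rfl
  have h := intervalIntegral.integral_comp_mul_left (a := 0) (b := m)
      (fun x => Real.exp x) (c := c) hc
  simp [integral_exp] at h
  rw [h]
  field_simp

/-- Quantum Ornstein–Uhlenbeck correlation identity: for `t, s ≥ 0`,
`(γ²/(4ε²))·exp(−γ(t+s)/(2ε))·∫₀^{min(t,s)} exp(γu/ε) du + (γ/(4ε))·exp(−γ(t+s)/(2ε))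
  = G_ε(t−s)`. -/
theorem OU_correlation_identity
    (γ ε : ℝ) (hγ : 0 < γ) (hε : 0 < ε) (t s : ℝ) (ht : 0 ≤ t) (hs : 0 ≤ s) :
    (γ ^ 2 / (4 * ε ^ 2)) * Real.exp (-(γ * (t + s)) / (2 * ε)) *
        (∫ u in (0 : ℝ)..(min t s), Real.exp (γ * u / ε))
      + (γ / (4 * ε)) * Real.exp (-(γ * (t + s)) / (2 * ε))
      = Gker γ ε (t - s) := by
  have hc : γ / ε ≠ 0 := div_ne_zero hγ.ne' hε.ne'
  set m := min t s with hm
  have hint : (∫ u in (0 : ℝ)..m, Real.exp (γ * u / ε))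
      = (Real.exp ((γ / ε) * m) - 1) / (γ / ε) := by
    rw [← exp_integral_aux (γ / ε) hc m]
    congr 1
    ext u
    ring_nf
  rw [hint]
  have habs : |t - s| = t + s - 2 * m := by
    rcases le_total t s with h | h
    · rw [hm, min_eq_left h, abs_of_nonpos (by linarith)]; ring
    · rw [hm, min_eq_right h, abs_of_nonneg (by linarith)]; ring
  have hexp : Real.exp (-(γ * (t + s)) / (2 * ε)) * Real.exp ((γ / ε) * m)
      = Real.exp (-(γ * |t - s|) / (2 * ε)) := by
    rw [← Real.exp_add, habs]
    congr 1
    field_simp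
    ring
  unfold Gker
  rw [← hexp]
  field_simp
  ring
end

section
/- Let A, B be real numbers with e^A < 1. Then the family indexed by finitely supported sequences n = (n_k)_{k≥1} of nonnegative integers with terms ∏_{k≥1} e^{(kA+B)·n_k}/(n_k!) is summable, and Σ_n e^{A·E(n) + B·N(n)}/(n_1! n_2! ⋯) = exp( e^{A+B}/(1 − e^A) ), where E(n) = Σ_k k·n_k and N(n) = Σ_k n_k. -/
/-!
Writing `x_k = e^{kA+B}`, the summand is `∏_k x_k^{n_k}/n_k!`, so formally the sum factors as
`∏_k ∑_m x_k^m/m! = ∏_k e^{x_k} = exp(∑_k x_k)`, and `∑_k x_k` is the geometric series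
`e^{A+B}/(1 - e^A)`. Since all terms are nonnegative, the factorisation is justified in `ℝ≥0∞`:
the sum over finsupps supported in a finite set `s` is a finite product of sums, and the full
sum is the supremum of these over `s`.
-/

open scoped ENNReal NNReal Nat

theorem ENNReal.tsum_pi_prod {ι : Type*} [Fintype ι] {α : Type*} (F : ι → α → ℝ≥0∞) :
    ∑' g : ι → α, ∏ i, F i (g i) = ∏ i, ∑' a, F i a := by
  revert F
  refine Fintype.induction_empty_option
    (P := fun ι _ => ∀ F : ι → α → ℝ≥0∞, ∑' g : ι → α, ∏ i, F i (g i) = ∏ i, ∑' a, F i a)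
    ?_ ?_ ?_ ι
  · intro ι κ _ e ih F
    -- `ih` is stated for the `Fintype ι` instance transported from `κ` along `e`
    let _ := Fintype.ofEquiv κ e.symm
    rw [← (e.arrowCongr (Equiv.refl α)).tsum_eq, ← e.prod_comp]
    simpa [← e.prod_comp] using ih (F ∘ e)
  · intro F
    simp
  · intro ι _ ih F
    rw [← (Equiv.piOptionEquivProd (β := fun _ => α)).symm.tsum_eq, ENNReal.tsum_prod']
    simp [Fintype.prod_option, ENNReal.tsum_mul_left, ENNReal.tsum_mul_right, ih]

section Finsupp

variable {ι M : Type*} [AddCommMonoid M]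

theorem ENNReal.tsum_finsupp_eq_iSup (F : (ι →₀ M) → ℝ≥0∞) :
    ∑' f, F f = ⨆ s : Finset ι, ∑' f : {f : ι →₀ M // ↑f.support ⊆ (s : Set ι)}, F f := by
  classical
  refine le_antisymm ?_
    (iSup_le fun s => ENNReal.tsum_comp_le_tsum_of_injective Subtype.val_injective F)
  rw [ENNReal.tsum_eq_iSup_sum]
  refine iSup_le fun t => le_iSup_of_le (t.biUnion Finsupp.support) ?_
  have hsub : ∀ f ∈ t, ↑f.support ⊆ ((t.biUnion Finsupp.support : Finset ι) : Set ι) :=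
    fun f hf => mod_cast Finset.subset_biUnion_of_mem Finsupp.support hf
  rw [← Finset.sum_subtype_of_mem F hsub]
  exact ENNReal.sum_le_tsum _

theorem ENNReal.tsum_finsupp_prod_of_support_subset (s : Finset ι) (w : ι → M → ℝ≥0∞)
    (hw : ∀ i, w i 0 = 1) :
    ∑' f : {f : ι →₀ M // ↑f.support ⊆ (s : Set ι)}, f.1.prod w = ∏ i ∈ s, ∑' m, w i m := by
  let e := (Finsupp.restrictSupportEquiv (s : Set ι) M).trans Finsupp.equivFunOnFinite
  have hprod : ∀ f : {f : ι →₀ M // ↑f.support ⊆ (s : Set ι)},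
      f.1.prod w = ∏ i : (s : Set ι), w i (e f i) := by
    intro f
    rw [Finsupp.prod_of_support_subset f.1 (mod_cast f.2) w (fun i _ => hw i)]
    exact (Finset.prod_coe_sort s fun i => w i (f.1 i)).symm
  simp_rw [hprod]
  rw [e.tsum_eq (fun g => ∏ i : (s : Set ι), w i (g i)), ENNReal.tsum_pi_prod]
  exact Finset.prod_coe_sort s fun i => ∑' m, w i m

theorem ENNReal.tsum_finsupp_prod (w : ι → M → ℝ≥0∞) (hw : ∀ i, w i 0 = 1) :
    ∑' f : ι →₀ M, f.prod w = ⨆ s : Finset ι, ∏ i ∈ s, ∑' m, w i m := by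
  simp_rw [ENNReal.tsum_finsupp_eq_iSup, ENNReal.tsum_finsupp_prod_of_support_subset _ w hw]

end Finsupp

theorem hasSum_of_tsum_ofReal_eq {α : Type*} {f : α → ℝ} {c : ℝ} (hf : ∀ i, 0 ≤ f i)
    (hc : 0 ≤ c) (h : ∑' i, ENNReal.ofReal (f i) = ENNReal.ofReal c) : HasSum f c := by
  lift f to α → ℝ≥0 using hf
  lift c to ℝ≥0 using hc
  simp only [ENNReal.ofReal_coe_nnreal] at h
  exact NNReal.hasSum_coe.2 (ENNReal.hasSum_coe.1 (h ▸ ENNReal.summable.hasSum))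

theorem ENNReal.iSup_ofReal_exp_sum {ι : Type*} {x : ι → ℝ} (hx0 : ∀ i, 0 ≤ x i)
    (hx : Summable x) :
    ⨆ s : Finset ι, ENNReal.ofReal (Real.exp (∑ i ∈ s, x i)) =
      ENNReal.ofReal (Real.exp (∑' i, x i)) := by
  have hmono : Monotone fun s : Finset ι => ENNReal.ofReal (Real.exp (∑ i ∈ s, x i)) :=
    fun s t hst => ENNReal.ofReal_le_ofReal <| Real.exp_le_exp.2 <|
      Finset.sum_le_sum_of_subset_of_nonneg hst fun i _ _ => hx0 i
  exact tendsto_nhds_unique (tendsto_atTop_iSup hmono)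
    ((ENNReal.continuous_ofReal.comp Real.continuous_exp).continuousAt.tendsto.comp hx.hasSum)

theorem Real.hasSum_finsupp_prod_pow_div_factorial {ι : Type*} {x : ι → ℝ} (hx0 : ∀ i, 0 ≤ x i)
    (hx : Summable x) :
    HasSum (fun f : ι →₀ ℕ => f.prod fun i m => x i ^ m / m !) (Real.exp (∑' i, x i)) := by
  have hterm : ∀ i m, 0 ≤ x i ^ m / m ! := fun i m => by have := hx0 i; positivity
  have hexp : ∀ i, ∑' m : ℕ, ENNReal.ofReal (x i ^ m / m !) = ENNReal.ofReal (Real.exp (x i)) := by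
    intro i
    have hsum : HasSum (fun m : ℕ => x i ^ m / m !) (Real.exp (x i)) := by
      simpa [Real.exp_eq_exp_ℝ] using NormedSpace.expSeries_div_hasSum_exp (x i)
    rw [← ENNReal.ofReal_tsum_of_nonneg (hterm i) hsum.summable, hsum.tsum_eq]
  refine hasSum_of_tsum_ofReal_eq (fun f => Finset.prod_nonneg fun i _ => hterm i _)
    (Real.exp_pos _).le ?_
  calc ∑' f : ι →₀ ℕ, ENNReal.ofReal (f.prod fun i m => x i ^ m / m !)
      = ∑' f : ι →₀ ℕ, f.prod fun i m => ENNReal.ofReal (x i ^ m / m !) :=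
        tsum_congr fun f => ENNReal.ofReal_prod_of_nonneg fun i _ => hterm i _
    _ = ⨆ s : Finset ι, ENNReal.ofReal (Real.exp (∑ i ∈ s, x i)) := by
        rw [ENNReal.tsum_finsupp_prod _ (by simp)]
        simp_rw [hexp, Real.exp_sum,
          ENNReal.ofReal_prod_of_nonneg fun i _ => (Real.exp_pos (x i)).le]
    _ = ENNReal.ofReal (Real.exp (∑' i, x i)) := ENNReal.iSup_ofReal_exp_sum hx0 hx

/-- Summing `e^{A·E(n) + B·N(n)}/(n₁! n₂! ⋯)` over all finitely supported sequences
`n = (n_k)_{k≥1}` of nonnegative integers (encoded as `f : ℕ →₀ ℕ`, where `f k`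
represents `n_{k+1}`), with `E(n) = Σ_k k·n_k` and `N(n) = Σ_k n_k`: if `e^A < 1`
the family is summable and the sum equals `exp(e^{A+B}/(1 − e^A))`. -/
theorem partition_sum_identity (A B : ℝ) (hA : Real.exp A < 1) :
    Summable (fun f : ℕ →₀ ℕ =>
      Real.exp (A * (f.sum fun k m => ((k + 1) * m : ℝ)) + B * (f.sum fun _ m => (m : ℝ))) /
        ∏ k ∈ f.support, (Nat.factorial (f k) : ℝ)) ∧
    ∑' f : ℕ →₀ ℕ,
        Real.exp (A * (f.sum fun k m => ((k + 1) * m : ℝ)) + B * (f.sum fun _ m => (m : ℝ))) /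
          ∏ k ∈ f.support, (Nat.factorial (f k) : ℝ)
      = Real.exp (Real.exp (A + B) / (1 - Real.exp A)) := by
  set x : ℕ → ℝ := fun k => Real.exp (A + B) * Real.exp A ^ k
  have hgeom : HasSum x (Real.exp (A + B) / (1 - Real.exp A)) := by
    simpa [div_eq_mul_inv] using
      (hasSum_geometric_of_lt_one (Real.exp_pos A).le hA).mul_left (Real.exp (A + B))
  have hterm : ∀ f : ℕ →₀ ℕ,
      Real.exp (A * (f.sum fun k m => ((k + 1) * m : ℝ)) + B * (f.sum fun _ m => (m : ℝ))) /
        ∏ k ∈ f.support, (Nat.factorial (f k) : ℝ) = f.prod fun k m => x k ^ m / m ! := by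
    intro f
    simp only [Finsupp.sum, Finsupp.prod, Finset.mul_sum, ← Finset.sum_add_distrib, Real.exp_sum,
      ← Finset.prod_div_distrib, x, ← Real.exp_nat_mul, ← Real.exp_add]
    exact Finset.prod_congr rfl fun k _ => by ring_nf
  have h := Real.hasSum_finsupp_prod_pow_div_factorial (fun k => by positivity) hgeom.summable
  rw [hgeom.tsum_eq, ← funext hterm] at h
  exact ⟨h.summable, h.tsum_eq⟩
end
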